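/- arXiv:math/9811070 — 4 statements merged into one kernel-verified Lean document; each statement's English description precedes it below -/
import Mathlib

section
/- For every positive integer n, ∑_{k=1}^{n} k · binomial(n,k)^2 · binomial(n+k,k)^2 · (1/(2k) + ∑_{i=1}^{n+k} 1/i + ∑_{i=1}^{n-k} 1/i - 2·∑_{i=1}^{k} 1/i) = 0. -/
/-!
Let `P = X ∏_{j=1}^n (X - j)^2`, monic of degree `2n + 1`, and `Q_k = ∏_{j ≤ n, j ≠ k} (X + j)^2`.
Hermite interpolation of `P` at the double nodes `-k`, `0 ≤ k ≤ n`, shows that the coefficient of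
`X^(2n+1)` in `P`, namely `1`, is the sum over `k` of `(P / Q_k)'(-k)`. Logarithmic
differentiation evaluates `(P / Q_k)'(-k)` as
`binom(n,k)^2 binom(n+k,k)^2 (1 + 2k (H_{n+k} + H_{n-k} - 2 H_k))`: this is `1` for `k = 0` and
twice the `k`-th summand of the identity for `k ≥ 1`.
-/

open Polynomial Finset Lagrange
open scoped Nat

section Hermite

variable {F : Type*} [Field F]

theorem Polynomial.sq_X_sub_C_dvd_of_isRoot {R : Type*} [CommRing R] {p : R[X]} {a : R}
    (h : p.IsRoot a) (h' : (derivative p).IsRoot a) : (X - C a) ^ 2 ∣ p := by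
  obtain ⟨q, rfl⟩ := dvd_iff_isRoot.mpr h
  have hq : q.IsRoot a := by simpa [derivative_mul] using h'
  obtain ⟨r, rfl⟩ := dvd_iff_isRoot.mpr hq
  exact ⟨r, by ring⟩

/-- The derivative of the rational function `p / q` at `a`. -/
noncomputable def evalDerivDiv (p q : F[X]) (a : F) : F :=
  (eval a (derivative p) * eval a q - eval a p * eval a (derivative q)) / eval a q ^ 2

variable {ι : Type*} [DecidableEq ι] {s : Finset ι} {v : ι → F}

theorem Lagrange.eval_derivative_nodal_div {x : F} (hx : ∀ i ∈ s, x ≠ v i) :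
    eval x (derivative (nodal s v)) / eval x (nodal s v) = ∑ i ∈ s, (x - v i)⁻¹ := by
  rw [derivative_nodal, eval_finsetSum, sum_div]
  refine sum_congr rfl fun i hi => ?_
  have : eval x (nodal (s.erase i) v) ≠ 0 :=
    eval_nodal_not_at_node fun j hj => hx j (mem_of_mem_erase hj)
  rw [nodal_eq_mul_nodal_erase hi, eval_mul, eval_sub, eval_X, eval_C, mul_comm,
    div_mul_cancel_left₀ this]

theorem evalDerivDiv_X_mul_sq_sq {p q : F[X]} {a : F} (hp : eval a p ≠ 0) (hq : eval a q ≠ 0) :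
    evalDerivDiv (X * p ^ 2) (q ^ 2) a = (eval a p / eval a q) ^ 2 *
      (1 + 2 * a * (eval a (derivative p) / eval a p - eval a (derivative q) / eval a q)) := by
  simp only [evalDerivDiv, derivative_mul, derivative_X, derivative_sq, eval_add, eval_mul,
    eval_pow, eval_X, eval_one, eval_C]
  field_simp
  ring

theorem Lagrange.eval_nodal_erase_ne_zero (hvs : Set.InjOn v s) {i : ι} (hi : i ∈ s) :
    eval (v i) (nodal (s.erase i) v) ≠ 0 :=
  eval_nodal_not_at_node fun _ hj h => (mem_erase.mp hj).1 (hvs (mem_erase.mp hj).2 hi h.symm)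

theorem natDegree_C_add_C_mul_X_sub_C_le (a b c : F) : (C a + C b * (X - C c)).natDegree ≤ 1 :=
  (natDegree_add_le _ _).trans
    (max_le (by simp) ((natDegree_C_mul_le _ _).trans (natDegree_X_sub_C_le _)))

theorem Lagrange.natDegree_nodal_erase_sq {i : ι} (hi : i ∈ s) :
    (nodal (s.erase i) v ^ 2).natDegree = 2 * #s - 2 := by
  rw [natDegree_pow, natDegree_nodal, card_erase_of_mem hi]; omega

/-- The Hermite interpolant of `p` at the double nodes `v i`: it agrees with `p` to first order
at every node. -/
noncomputable def hermiteInterpolate (s : Finset ι) (v : ι → F) (p : F[X]) : F[X] :=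
  ∑ i ∈ s, (C (eval (v i) p / eval (v i) (nodal (s.erase i) v ^ 2))
    + C (evalDerivDiv p (nodal (s.erase i) v ^ 2) (v i)) * (X - C (v i))) * nodal (s.erase i) v ^ 2

theorem Lagrange.eq_hermiteInterpolate (hvs : Set.InjOn v s) {p : F[X]}
    (hp : p.degree < ↑(2 * #s)) : p = hermiteInterpolate s v p := by
  set Q : ι → F[X] := fun i => nodal (s.erase i) v ^ 2
  set L : ι → F[X] := fun i => C (eval (v i) p / eval (v i) (Q i))
    + C (evalDerivDiv p (Q i) (v i)) * (X - C (v i))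
  have hQ_ne (i) (hi : i ∈ s) : eval (v i) (Q i) ≠ 0 :=
    (eval_pow 2).trans_ne (pow_ne_zero 2 (eval_nodal_erase_ne_zero hvs hi))
  -- The `i`-th summand matches `p` to first order at `v i`; the others vanish there doubly.
  have hdvd (i) (hi : i ∈ s) : (X - C (v i)) ^ 2 ∣ p - ∑ j ∈ s, L j * Q j := by
    have := hQ_ne i hi
    rw [← add_sum_erase s _ hi, ← sub_sub]
    have hQ (j) (hj : j ∈ s.erase i) : (X - C (v i)) ^ 2 ∣ Q j :=
      pow_dvd_pow_of_dvd (X_sub_C_dvd_nodal v (mem_erase.mpr ⟨(ne_of_mem_erase hj).symm, hi⟩)) 2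
    refine dvd_sub (sq_X_sub_C_dvd_of_isRoot ?_ ?_)
      (dvd_sum fun j hj => dvd_mul_of_dvd_right (hQ j hj) _)
    · simp only [IsRoot.def, eval_sub, eval_mul, eval_add, eval_C, eval_X, sub_self, mul_zero,
        add_zero, L]
      field_simp
      ring
    · simp only [evalDerivDiv, derivative_sub, derivative_mul, derivative_add, derivative_C,
        derivative_X, IsRoot.def, eval_sub, eval_add, eval_mul, eval_C, eval_X, sub_self, zero_mul,
        sub_zero, mul_one, zero_add, mul_zero, add_zero, L]
      field_simp
      ring
  have hdeg (i) (hi : i ∈ s) : (L i * Q i).natDegree < 2 * #s := by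
    have := card_pos.mpr ⟨i, hi⟩
    have : (L i * Q i).natDegree ≤ 1 + (2 * #s - 2) := natDegree_mul_le.trans
      (add_le_add (natDegree_C_add_C_mul_X_sub_C_le _ _ _) (natDegree_nodal_erase_sq hi).le)
    omega
  rw [← sub_eq_zero]
  refine eq_zero_of_dvd_of_degree_lt (p := nodal s v ^ 2) ?_ ?_
  · rw [nodal, ← prod_pow]
    exact prod_dvd_of_coprime (fun i hi j hj hij =>
      (isCoprime_X_sub_C_of_isUnit_sub (sub_ne_zero.mpr (hvs.ne hi hj hij)).isUnit).pow) hdvd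
  · rw [degree_eq_natDegree (pow_ne_zero 2 nodal_ne_zero), natDegree_pow, natDegree_nodal,
      ← mem_degreeLT]
    refine Submodule.sub_mem _ (mem_degreeLT.mpr hp) (Submodule.sum_mem _ fun i hi => ?_)
    exact mem_degreeLT.mpr (degree_le_natDegree.trans_lt (by exact_mod_cast hdeg i hi))

theorem Lagrange.coeff_eq_sum_evalDerivDiv_nodal_erase_sq (hvs : Set.InjOn v s) {p : F[X]}
    (hp : p.degree < ↑(2 * #s)) :
    p.coeff (2 * #s - 1) = ∑ i ∈ s, evalDerivDiv p (nodal (s.erase i) v ^ 2) (v i) := by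
  conv_lhs => rw [eq_hermiteInterpolate hvs hp]
  rw [hermiteInterpolate, finsetSum_coeff]
  refine sum_congr rfl fun i hi => ?_
  have := card_pos.mpr ⟨i, hi⟩
  rw [show 2 * #s - 1 = 1 + (2 * #s - 2) by omega]
  refine (coeff_mul_add_eq_of_natDegree_le (natDegree_C_add_C_mul_X_sub_C_le (F := F) _ _ _)
    (natDegree_nodal_erase_sq hi).le).trans ?_
  rw [← natDegree_nodal_erase_sq (v := v) hi, (nodal_monic.pow 2).coeff_natDegree]
  simp

end Hermite

section

variable {M : Type*} [CommMonoid M]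

@[to_additive]
theorem Finset.prod_range_sub_self (f : ℚ → M) (k : ℕ) :
    ∏ j ∈ range k, f (j - k) = ∏ j ∈ range k, f (-(j + 1)) := by
  refine prod_nbij' (k - 1 - ·) (k - 1 - ·) ?_ ?_ ?_ ?_ ?_ <;> intro j hj <;>
    simp only [mem_range] at hj ⊢ <;> try omega
  rw [show k - 1 - j = k - (j + 1) by omega, Nat.cast_sub (show j + 1 ≤ k from hj)]
  push_cast; ring_nf

@[to_additive]
theorem Finset.prod_range_succ_erase_sub {k n : ℕ} (f : ℚ → M) (hk : k ≤ n) :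
    ∏ j ∈ (range (n + 1)).erase k, f (j - k) =
      (∏ j ∈ range k, f (-(j + 1))) * ∏ j ∈ range (n - k), f (j + 1) := by
  have hsplit : (range (n + 1)).erase k = range k ∪ Ico (k + 1) (n + 1) := by
    ext j; simp only [mem_erase, mem_range, mem_union, mem_Ico]; omega
  rw [hsplit, prod_union (disjoint_left.mpr fun j hj hj' => by simp only [mem_range, mem_Ico] at hj hj'; omega),
    prod_range_sub_self, prod_Ico_eq_prod_range, show n + 1 - (k + 1) = n - k by omega]
  congr 1
  refine prod_congr rfl fun j _ => congrArg f ?_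
  push_cast; ring

end

theorem harmonic_add (k n : ℕ) :
    harmonic (k + n) = harmonic k + ∑ j ∈ range n, ((k + j : ℕ) + 1 : ℚ)⁻¹ := by
  simp only [harmonic, sum_range_add]
  push_cast; rfl

theorem eval_neg_nodal_range_add_one (k n : ℕ) :
    eval (-(k : ℚ)) (nodal (range n) fun j => (j : ℚ) + 1) =
      (-1) ^ n * (n ! * (k + n).choose n) := by
  rw [eval_nodal, ← Nat.cast_mul, ← Nat.ascFactorial_eq_factorial_mul_choose,
    Nat.ascFactorial_eq_prod_range, Nat.cast_prod,
    show (-1 : ℚ) ^ n = (-1) ^ #(range n) by rw [card_range], ← prod_neg]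
  push_cast
  refine prod_congr rfl fun j _ => by ring

theorem sum_inv_neg_sub_add_one (k n : ℕ) :
    ∑ j ∈ range n, (-(k : ℚ) - (j + 1))⁻¹ = harmonic k - harmonic (k + n) := by
  rw [harmonic_add, sub_add_cancel_left, ← sum_neg_distrib]
  refine sum_congr rfl fun j _ => ?_
  rw [← inv_neg]; push_cast; ring_nf

theorem eval_neg_nodal_range_erase {k n : ℕ} (hk : k ≤ n) :
    eval (-(k : ℚ)) (nodal ((range (n + 1)).erase k) fun j => -(j : ℚ)) =
      (-1) ^ k * (k ! * (n - k)!) := by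
  rw [eval_nodal, prod_congr rfl fun (j : ℕ) _ => show -(k : ℚ) - -(j : ℚ) = j - k by ring,
    prod_range_succ_erase_sub (fun x => x) hk, ← prod_range_add_one_eq_factorial,
    ← prod_range_add_one_eq_factorial]
  simp only [prod_neg, card_range]
  push_cast; ring

theorem sum_inv_neg_sub_neg_range_erase {k n : ℕ} (hk : k ≤ n) :
    ∑ j ∈ (range (n + 1)).erase k, (-(k : ℚ) - -(j : ℚ))⁻¹ =
      harmonic (n - k) - harmonic k := by
  rw [sum_congr rfl fun (j : ℕ) _ => show (-(k : ℚ) - -(j : ℚ))⁻¹ = (j - k : ℚ)⁻¹ by ring_nf,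
    sum_range_succ_erase_sub (·⁻¹) hk]
  simp only [harmonic, inv_neg, sum_neg_distrib]
  push_cast; ring

theorem evalDerivDiv_X_mul_nodal_sq {k n : ℕ} (hk : k ≤ n) :
    evalDerivDiv (X * nodal (range n) (fun j => (j : ℚ) + 1) ^ 2)
        (nodal ((range (n + 1)).erase k) (fun j => -(j : ℚ)) ^ 2) (-(k : ℚ)) =
      (n.choose k : ℚ) ^ 2 * ((n + k).choose k : ℚ) ^ 2 *
        (1 + 2 * k * (harmonic (n + k) + harmonic (n - k) - 2 * harmonic k)) := by
  have hm : ∀ j ∈ range n, -(k : ℚ) ≠ j + 1 := fun j _ h => by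
    linarith [k.cast_nonneg (α := ℚ), j.cast_nonneg (α := ℚ)]
  have hq : ∀ j ∈ (range (n + 1)).erase k, -(k : ℚ) ≠ -j := fun j hj h =>
    (mem_erase.mp hj).1 (by exact_mod_cast (neg_inj.mp h).symm)
  rw [evalDerivDiv_X_mul_sq_sq (eval_nodal_not_at_node hm) (eval_nodal_not_at_node hq),
    eval_derivative_nodal_div hm, eval_derivative_nodal_div hq, sum_inv_neg_sub_add_one,
    sum_inv_neg_sub_neg_range_erase hk, eval_neg_nodal_range_add_one,
    eval_neg_nodal_range_erase hk, add_comm k n, Nat.choose_symm_add]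
  have hn : (n.choose k : ℚ) * k ! * (n - k)! = n ! := by
    exact_mod_cast Nat.choose_mul_factorial_mul_factorial hk
  have hsign (j : ℕ) : ((-1 : ℚ) ^ j) ^ 2 = 1 := by rw [pow_right_comm, neg_one_sq, one_pow]
  rw [← hn]
  simp only [div_pow, mul_pow, hsign, one_mul]
  field_simp
  ring

theorem sum_choose_sq_mul_choose_sq_mul_harmonic (n : ℕ) :
    ∑ k ∈ range (n + 1), (n.choose k : ℚ) ^ 2 * ((n + k).choose k : ℚ) ^ 2 *
      (1 + 2 * k * (harmonic (n + k) + harmonic (n - k) - 2 * harmonic k)) = 1 := by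
  have hmonic : (X * nodal (range n) (fun j => (j : ℚ) + 1) ^ 2).Monic :=
    monic_X.mul (nodal_monic.pow 2)
  have hdeg : (X * nodal (range n) (fun j => (j : ℚ) + 1) ^ 2).natDegree = 2 * (n + 1) - 1 := by
    rw [monic_X.natDegree_mul (nodal_monic.pow 2), natDegree_X, natDegree_pow, natDegree_nodal,
      card_range]
    omega
  have hinj : Set.InjOn (fun j : ℕ => -(j : ℚ)) (range (n + 1)) :=
    (neg_injective.comp Nat.cast_injective).injOn
  have := coeff_eq_sum_evalDerivDiv_nodal_erase_sq hinj
    (p := X * nodal (range n) (fun j => (j : ℚ) + 1) ^ 2)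
    (by rw [degree_eq_natDegree hmonic.ne_zero, hdeg, card_range]; exact_mod_cast (by omega))
  rw [card_range, ← hdeg, hmonic.coeff_natDegree] at this
  refine (sum_congr rfl fun k hk => ?_).trans this.symm
  exact (evalDerivDiv_X_mul_nodal_sq (Nat.lt_succ_iff.mp (mem_range.mp hk))).symm

theorem ahlgren_ono_identity_general (n : ℕ) :
    ∑ k ∈ Finset.Icc 1 n,
      (k : ℚ) * (n.choose k : ℚ) ^ 2 * ((n + k).choose k : ℚ) ^ 2 *
        (1 / (2 * (k : ℚ)) + ∑ i ∈ Finset.Icc 1 (n + k), (1 : ℚ) / i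
          + ∑ i ∈ Finset.Icc 1 (n - k), (1 : ℚ) / i
          - 2 * ∑ i ∈ Finset.Icc 1 k, (1 : ℚ) / i) = 0 := by
  have hsum := sum_choose_sq_mul_choose_sq_mul_harmonic n
  rw [show range (n + 1) = insert 0 (Icc 1 n) by
    ext k; simp only [mem_range, mem_insert, mem_Icc]; omega, sum_insert (by simp)] at hsum
  simp only [Nat.choose_zero_right, add_zero, Nat.cast_one, one_pow, CharP.cast_eq_zero,
    mul_zero, zero_mul] at hsum
  calc _ = ∑ k ∈ Icc 1 n, (n.choose k : ℚ) ^ 2 * ((n + k).choose k : ℚ) ^ 2 *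
        (1 + 2 * k * (harmonic (n + k) + harmonic (n - k) - 2 * harmonic k)) / 2 := by
        refine sum_congr rfl fun k hk => ?_
        have : (k : ℚ) ≠ 0 := by have := (mem_Icc.mp hk).1; positivity
        simp only [one_div, ← harmonic_eq_sum_Icc]
        field_simp
        ring
    _ = 0 := by rw [← sum_div]; linarith

theorem ahlgren_ono_identity (n : ℕ) (hn : 1 ≤ n) :
    ∑ k ∈ Finset.Icc 1 n,
      (k : ℚ) * (n.choose k : ℚ) ^ 2 * ((n + k).choose k : ℚ) ^ 2 *
        (1 / (2 * (k : ℚ)) + ∑ i ∈ Finset.Icc 1 (n + k), (1 : ℚ) / i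
          + ∑ i ∈ Finset.Icc 1 (n - k), (1 : ℚ) / i
          - 2 * ∑ i ∈ Finset.Icc 1 k, (1 : ℚ) / i) = 0 :=
  ahlgren_ono_identity_general n
end

section
/- For all nonnegative integers n, Γ(3/2+n)/(Γ(3/2)·Γ(n+1)) = ∑_{k=0}^{∞} (-1)^k · (4k+1) · ((1/2)_k)^2 · (-n)_k / ((k!)^2 · (3/2+n)_k), where the sum terminates since (-n)_k = 0 for k > n. -/
/-- The rising factorial (Pochhammer symbol) `(a)_k = a(a+1)⋯(a+k-1)` over `ℝ`. -/
noncomputable def rise (a : ℝ) (k : ℕ) : ℝ := Polynomial.eval a (ascPochhammer ℝ k)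

lemma rise_zero (a : ℝ) : rise a 0 = 1 := by simp [rise]

lemma rise_succ (a : ℝ) (k : ℕ) : rise a (k + 1) = rise a k * (a + k) := by
  simpa [rise] using ascPochhammer_succ_eval k a

lemma rise_succ_left (a : ℝ) (k : ℕ) : rise a (k + 1) = a * rise (a + 1) k := by
  simp [rise, ascPochhammer_succ_left, Polynomial.eval_comp]

lemma rise_pos {a : ℝ} (ha : 0 < a) (k : ℕ) : 0 < rise a k :=
  ascPochhammer_pos k a ha

noncomputable def T (n k : ℕ) : ℝ :=
  (-1 : ℝ) ^ k * (4 * k + 1) * (rise (1 / 2) k) ^ 2 * rise (-(n : ℝ)) k /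
    ((k.factorial : ℝ) ^ 2 * rise (3 / 2 + (n : ℝ)) k)

noncomputable def Hh (n k : ℕ) : ℝ :=
  (-1 : ℝ) ^ (k + 1) * ((k : ℝ) + 1) ^ 2 * (2 * n + 3) * (rise (1 / 2) (k + 1)) ^ 2 *
      rise (-(n : ℝ)) k /
    (((k + 1).factorial : ℝ) ^ 2 * rise (3 / 2 + (n : ℝ)) (k + 1))

lemma hD (n k : ℕ) : rise (3 / 2 + ((n : ℝ) + 1)) (k + 1) =
    rise (3 / 2 + (n : ℝ)) k * (3 / 2 + (n : ℝ) + k) * (3 / 2 + (n : ℝ) + ((k : ℝ) + 1)) /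
      (3 / 2 + (n : ℝ)) := by
  have h0 : (3 / 2 + (n : ℝ)) ≠ 0 := by positivity
  rw [eq_div_iff h0]
  have h := rise_succ_left (3 / 2 + (n : ℝ)) (k + 1)
  rw [show (3 / 2 + (n : ℝ)) + 1 = 3 / 2 + ((n : ℝ) + 1) by ring] at h
  rw [mul_comm, ← h, rise_succ, rise_succ]; push_cast; ring

set_option maxHeartbeats 4000000 in
lemma key (x y A B C Fc e : ℝ) (hC : C ≠ 0) (hF : Fc ≠ 0)
    (h1 : 3/2 + x + y ≠ 0) (h2 : 3/2 + x + (y+1) ≠ 0)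
    (hk1 : y + 1 ≠ 0) (hk2 : y + 2 ≠ 0) :
    e * (-1) * (-1) * ((y+1)+1)^2 * (2*x+3) * ((A * (1/2 + y)) * (1/2 + (y+1)))^2 * (B * (-x + y)) /
        (((y+2) * ((y+1) * Fc))^2 * (C * ((3/2+x) + y) * ((3/2+x) + (y+1)))) =
      e * (-1) * ((y : ℝ)+1)^2 * (2*x+3) * (A * (1/2+y))^2 * B /
        (((y+1) * Fc)^2 * (C * ((3/2+x)+y)))
      + ((x+1) * (e * (-1) * (4*(y+1)+1) * (A * (1/2+y))^2 * (-(x+1) * B) * (3/2+x) /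
            (((y+1) * Fc)^2 * (C * ((3/2+x)+y) * ((3/2+x)+(y+1)))))
         - (x + 3/2) * (e * (-1) * (4*(y+1)+1) * (A * (1/2+y))^2 * (B * (-x+y)) /
            (((y+1) * Fc)^2 * (C * ((3/2+x)+y))))) := by
  have hd2 : (((y+1) * Fc)^2 * (C * ((3/2+x)+y))) ≠ 0 := by
    apply mul_ne_zero (pow_ne_zero _ (mul_ne_zero hk1 hF)) (mul_ne_zero hC h1)
  have hd3 : (((y+1) * Fc)^2 * (C * ((3/2+x)+y) * ((3/2+x)+(y+1)))) ≠ 0 := by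
    apply mul_ne_zero (pow_ne_zero _ (mul_ne_zero hk1 hF))
      (mul_ne_zero (mul_ne_zero hC h1) h2)
  have hd1 : (((y+2) * ((y+1) * Fc))^2 * (C * ((3/2+x) + y) * ((3/2+x) + (y+1)))) ≠ 0 := by
    apply mul_ne_zero (pow_ne_zero _ (mul_ne_zero hk2 (mul_ne_zero hk1 hF)))
      (mul_ne_zero (mul_ne_zero hC h1) h2)
  rw [← mul_div_assoc ((x:ℝ)+1), ← mul_div_assoc ((x:ℝ)+3/2), div_sub_div _ _ hd3 hd2,
    div_add_div _ _ hd2 (mul_ne_zero hd3 hd2), div_eq_div_iff hd1 (mul_ne_zero hd2 (mul_ne_zero hd3 hd2))]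
  ring

set_option maxHeartbeats 4000000 in
lemma wz (n k : ℕ) :
    Hh n (k + 1) = Hh n k + (((n : ℝ) + 1) * T (n + 1) (k + 1) - ((n : ℝ) + 3 / 2) * T n (k + 1)) := by
  have hC : (0:ℝ) < rise (3 / 2 + (n : ℝ)) k := rise_pos (by positivity) k
  have hC' : rise (3 / 2 + (n : ℝ)) k ≠ 0 := ne_of_gt hC
  have h1 : (3/2 + (n:ℝ) + (k:ℝ)) ≠ 0 := by positivity
  have h2 : (3/2 + (n:ℝ) + ((k:ℝ)+1)) ≠ 0 := by positivity
  have h3 : (3/2 + (n:ℝ)) ≠ 0 := by positivity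
  have hF : ((k.factorial : ℝ)) ≠ 0 := Nat.cast_ne_zero.mpr k.factorial_ne_zero
  have hk1 : ((k:ℝ) + 1) ≠ 0 := by positivity
  have hk2 : ((k:ℝ) + 2) ≠ 0 := by positivity
  have hBn1 : rise (-((n : ℝ) + 1)) (k + 1) = -((n : ℝ) + 1) * rise (-(n : ℝ)) k := by
    have h := rise_succ_left (-((n : ℝ) + 1)) k
    rwa [show -((n : ℝ) + 1) + 1 = -(n : ℝ) by ring] at h
  have hH1 : Hh n (k+1) =
      (-1:ℝ)^k * (-1) * (-1) * (((k:ℝ)+1)+1)^2 * (2*(n:ℝ)+3) *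
        ((rise (1/2) k * (1/2 + (k:ℝ))) * (1/2 + ((k:ℝ)+1)))^2 *
        (rise (-(n:ℝ)) k * (-(n:ℝ) + (k:ℝ))) /
        ((((k:ℝ)+2) * (((k:ℝ)+1) * (k.factorial:ℝ)))^2 *
          (rise (3/2+(n:ℝ)) k * ((3/2+(n:ℝ)) + (k:ℝ)) * ((3/2+(n:ℝ)) + ((k:ℝ)+1)))) := by
    simp only [Hh, rise_succ, Nat.factorial_succ]
    push_cast
    ring
  have hH0 : Hh n k =
      (-1:ℝ)^k * (-1) * ((k:ℝ)+1)^2 * (2*(n:ℝ)+3) * (rise (1/2) k * (1/2+(k:ℝ)))^2 *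
        rise (-(n:ℝ)) k /
        ((((k:ℝ)+1) * (k.factorial:ℝ))^2 * (rise (3/2+(n:ℝ)) k * ((3/2+(n:ℝ))+(k:ℝ)))) := by
    simp only [Hh, rise_succ, Nat.factorial_succ]
    push_cast
    ring
  have hT2 : T n (k+1) =
      (-1:ℝ)^k * (-1) * (4*((k:ℝ)+1)+1) * (rise (1/2) k * (1/2+(k:ℝ)))^2 *
        (rise (-(n:ℝ)) k * (-(n:ℝ)+(k:ℝ))) /
        ((((k:ℝ)+1) * (k.factorial:ℝ))^2 * (rise (3/2+(n:ℝ)) k * ((3/2+(n:ℝ))+(k:ℝ)))) := by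
    simp only [T, rise_succ, Nat.factorial_succ]
    push_cast
    ring
  have hT1 : T (n+1) (k+1) =
      (-1:ℝ)^k * (-1) * (4*((k:ℝ)+1)+1) * (rise (1/2) k * (1/2+(k:ℝ)))^2 *
        (-((n:ℝ)+1) * rise (-(n:ℝ)) k) * (3/2+(n:ℝ)) /
        ((((k:ℝ)+1) * (k.factorial:ℝ))^2 *
          (rise (3/2+(n:ℝ)) k * ((3/2+(n:ℝ))+(k:ℝ)) * ((3/2+(n:ℝ))+((k:ℝ)+1)))) := by
    simp only [T, Nat.factorial_succ]
    push_cast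
    rw [hBn1, hD n k, rise_succ]
    field_simp
    ring
  rw [hH1, hH0, hT1, hT2]
  exact key (n:ℝ) (k:ℝ) (rise (1/2) k) (rise (-(n:ℝ)) k) (rise (3/2+(n:ℝ)) k)
    (k.factorial:ℝ) ((-1:ℝ)^k) hC' hF h1 h2 hk1 hk2

lemma rise_neg_nat (n : ℕ) : ∀ k : ℕ, n < k → rise (-(n : ℝ)) k = 0 := by
  intro k hk
  induction k with
  | zero => omega
  | succ k ih =>
    rw [rise_succ]
    rcases Nat.lt_succ_iff_lt_or_eq.mp hk with h | h
    · rw [ih h, zero_mul]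
    · subst h; simp

lemma tele (n : ℕ) : ∀ m : ℕ,
    ∑ k ∈ Finset.range (m + 1),
      (((n : ℝ) + 1) * T (n + 1) k - ((n : ℝ) + 3 / 2) * T n k) = Hh n m := by
  intro m
  induction m with
  | zero =>
    have h3 : (3 / 2 + (n : ℝ)) ≠ 0 := by positivity
    rw [zero_add, Finset.sum_range_one]
    simp only [Hh, T, rise_succ, rise_zero]
    push_cast
    field_simp
    ring
  | succ m ih =>
    rw [Finset.sum_range_succ, ih, wz n m]

lemma S_eq : ∀ n : ℕ,
    ∑ k ∈ Finset.range (n + 1), T n k = rise (3 / 2) n / (n.factorial : ℝ) := by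
  intro n
  induction n with
  | zero => simp [T, rise_zero]
  | succ n ih =>
    have hT0 : T n (n + 1) = 0 := by
      simp [T, rise_neg_nat n (n + 1) (Nat.lt_succ_self n)]
    have hH0 : Hh n (n + 1) = 0 := by
      simp [Hh, rise_neg_nat n (n + 1) (Nat.lt_succ_self n)]
    have h1 : ∑ k ∈ Finset.range (n + 1 + 1), T n k = rise (3 / 2) n / (n.factorial : ℝ) := by
      rw [Finset.sum_range_succ, hT0, add_zero, ih]
    have htele := tele n (n + 1)
    rw [hH0, Finset.sum_sub_distrib, ← Finset.mul_sum, ← Finset.mul_sum, h1] at htele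
    have hn1 : ((n : ℝ) + 1) ≠ 0 := by positivity
    have hf : ((n.factorial : ℝ)) ≠ 0 := Nat.cast_ne_zero.mpr n.factorial_ne_zero
    have hfact : (((n + 1).factorial : ℝ)) = ((n : ℝ) + 1) * (n.factorial : ℝ) := by
      rw [Nat.factorial_succ]; push_cast; ring
    rw [rise_succ, hfact]
    have heq : ((n : ℝ) + 1) * ∑ k ∈ Finset.range (n + 1 + 1), T (n + 1) k =
        ((n : ℝ) + 3 / 2) * (rise (3 / 2) n / (n.factorial : ℝ)) := by linarith
    field_simp at heq ⊢
    linarith [heq]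

lemma Gamma_rise (n : ℕ) : Real.Gamma (3 / 2 + n) = rise (3 / 2) n * Real.Gamma (3 / 2) := by
  induction n with
  | zero => simp [rise_zero]
  | succ n ih =>
    have h0 : (3 / 2 + (n : ℝ)) ≠ 0 := by positivity
    have h : (3 / 2 + ((n + 1 : ℕ) : ℝ)) = (3 / 2 + (n : ℝ)) + 1 := by push_cast; ring
    rw [h, Real.Gamma_add_one h0, ih, rise_succ]
    ring

theorem ramanujan_terminating (n : ℕ) :
    Real.Gamma (3 / 2 + n) / (Real.Gamma (3 / 2) * Real.Gamma (n + 1)) =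
      ∑' k : ℕ, (-1 : ℝ) ^ k * (4 * k + 1) * (rise (1 / 2) k) ^ 2 * rise (-n) k /
        ((k.factorial : ℝ) ^ 2 * rise (3 / 2 + n) k) := by
  have hsum : (∑' k : ℕ, (-1 : ℝ) ^ k * (4 * k + 1) * (rise (1 / 2) k) ^ 2 * rise (-n) k /
      ((k.factorial : ℝ) ^ 2 * rise (3 / 2 + n) k)) = ∑ k ∈ Finset.range (n + 1), T n k := by
    apply tsum_eq_sum
    intro k hk
    have hnk : n < k := by simpa using hk
    simp [T, rise_neg_nat n k hnk]
  rw [hsum, S_eq n, Gamma_rise n, Real.Gamma_nat_eq_factorial n]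
  have hG : Real.Gamma (3 / 2) ≠ 0 := ne_of_gt (Real.Gamma_pos_of_pos (by norm_num))
  have hf : ((n.factorial : ℝ)) ≠ 0 := Nat.cast_ne_zero.mpr n.factorial_ne_zero
  field_simp
end

section
/- For n = 3 and any nonnegative integer a, the constant term of ∏_{1 ≤ i ≠ j ≤ 3} (1 - z_i/z_j)^a in the Laurent polynomial ring ℚ[z₁^{±1}, z₂^{±1}, z₃^{±1}] equals (3a)!/(a!)³. -/
/-!
Good's proof. Let `F(a, b, c)` be the constant term of `∏_{i ≠ j} (1 - zᵢ / zⱼ) ^ aᵢ` with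
`(a₁, a₂, a₃) = (a, b, c)`. Lagrange interpolation with the denominators cleared writes
`∏_{i ≠ j} (1 - zᵢ / zⱼ)` as the sum of the three products that omit the factors with numerator
`z₁`, `z₂` or `z₃`, so `F(a, b, c) = F(a - 1, b, c) + F(a, b - 1, c) + F(a, b, c - 1)` for
positive `a, b, c`: the recurrence of the multinomial coefficients. If `c = 0`, the factors
involving `z₃` only contribute negative powers of `z₃`, which nothing else can cancel, so
`F(a, b, 0)` is the constant term of `(1 - z₁ / z₂) ^ a (1 - z₂ / z₁) ^ b`, which is `C(a + b, a)`
by the same argument in two variables.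
-/

open AddMonoidAlgebra
open scoped Pointwise Nat

namespace AddMonoidAlgebra

theorem mul_mem_supported {k G : Type*} [Semiring k] [Add G] {s t : Set G}
    {x y : k[G]} (hx : x ∈ supported k k s) (hy : y ∈ supported k k t) :
    x * y ∈ supported k k (s + t) := by
  classical
  rw [mem_supported] at hx hy ⊢
  grw [support_coeff_mul_subset, Finset.coe_add, hx, hy]

section Degree

variable {k G : Type*} [CommRing k] [AddMonoid G] {deg : G →+ ℤ}

variable (k deg) in
noncomputable def oneAddNegDegree : Submonoid k[G] where
  carrier := {y | y - 1 ∈ supported k k {g | deg g < 0}}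
  one_mem' := by simp
  mul_mem' {x y} hx hy := by
    have hneg : {g | deg g < 0} + {g | deg g < 0} ⊆ {g : G | deg g < 0} := by
      rintro _ ⟨g, hg, h, hh, rfl⟩
      simp only [Set.mem_ofPred_eq, map_add] at *
      omega
    have := supported_mono hneg (mul_mem_supported hx hy)
    simpa [show x * y - 1 = (x - 1) * (y - 1) + (x - 1) + (y - 1) by noncomm_ring] using
      add_mem (add_mem this hx) hy

theorem one_sub_single_mem_oneAddNegDegree {g : G} (hg : deg g < 0) :
    1 - single g (1 : k) ∈ oneAddNegDegree k deg := by
  classical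
  show 1 - single g 1 - 1 ∈ supported k k {g | deg g < 0}
  rw [sub_sub_cancel_left, ← single_neg]
  refine (mem_supported' ..).2 fun g' hg' ↦ ?_
  rw [coeff_single, Finsupp.single_apply, if_neg]
  rintro rfl
  exact hg' hg

theorem coeff_mul_of_mem_oneAddNegDegree {x y : k[G]} (hx : x ∈ gradeBy k deg 0)
    (hy : y ∈ oneAddNegDegree k deg) {v : G} (hv : deg v = 0) : (x * y).coeff v = x.coeff v := by
  have hxy : x * (y - 1) ∈ supported k k {g | deg g < 0} := by
    refine supported_mono ?_ (mul_mem_supported (s := deg ⁻¹' {0}) hx hy)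
    rintro _ ⟨g, hg, h, hh, rfl⟩
    simp only [Set.mem_preimage, Set.mem_singleton_iff, Set.mem_ofPred_eq, map_add] at *
    omega
  rw [show x * y = x + x * (y - 1) by noncomm_ring, coeff_add, Finsupp.add_apply,
    (mem_supported' ..).1 hxy v (by simp [hv]), add_zero]

end Degree

section Dyson

variable {k ι : Type*} [CommRing k] [DecidableEq ι]

/-- `single (Pi.single i 1 - Pi.single j 1) 1` is the monomial `zᵢ / zⱼ`. -/
noncomputable abbrev dysonFactor (i j : ι) : k[ι → ℤ] :=
  1 - single (Pi.single i 1 - Pi.single j 1) 1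

theorem dysonFactor_mul_swap (i j : ι) :
    (dysonFactor i j * dysonFactor j i : k[ι → ℤ]) = dysonFactor i j + dysonFactor j i := by
  have : (single (Pi.single i 1 - Pi.single j 1) 1 * single (Pi.single j 1 - Pi.single i 1) 1 :
      k[ι → ℤ]) = 1 := by
    rw [single_mul_single, sub_add_sub_cancel, sub_self, one_mul, one_def]
  linear_combination this

theorem of'_mul_dysonFactor (i j : ι) :
    (of' k _ (Pi.single j 1) * dysonFactor i j : k[ι → ℤ]) =
      of' k _ (Pi.single j 1) - of' k _ (Pi.single i 1) := by
  rw [mul_sub, mul_one, of'_apply, single_mul_single, one_mul, add_sub_cancel, of'_apply]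

theorem dysonFactor_mem_oneAddNegDegree {i j : ι} (hij : i ≠ j) :
    (dysonFactor i j : k[ι → ℤ]) ∈ oneAddNegDegree k (Pi.evalAddMonoidHom (fun _ ↦ ℤ) j) :=
  one_sub_single_mem_oneAddNegDegree (by simp [hij])

theorem dysonFactor_mem_gradeBy_zero {i j l : ι} (hil : i ≠ l) (hjl : j ≠ l) :
    (dysonFactor i j : k[ι → ℤ]) ∈ gradeBy k (Pi.evalAddMonoidHom (fun _ ↦ ℤ) l) 0 := by
  refine sub_mem (SetLike.one_mem_graded _) ?_
  convert single_mem_gradeBy (R := k) (Pi.evalAddMonoidHom (fun _ ↦ ℤ) l) _ 1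
  simp [hil, hjl]

theorem coeff_zero_dysonFactor_pow_mul_pow {i j : ι} (hij : i ≠ j) : ∀ a b : ℕ,
    (dysonFactor i j ^ a * dysonFactor j i ^ b : k[ι → ℤ]).coeff 0 = (a + b).choose a
  | a, 0 => by
    simpa using coeff_mul_of_mem_oneAddNegDegree (SetLike.one_mem_graded _)
      ((oneAddNegDegree _ _).pow_mem (dysonFactor_mem_oneAddNegDegree (k := k) hij) a)
      (map_zero _)
  | 0, b + 1 => by
    simpa using coeff_mul_of_mem_oneAddNegDegree (SetLike.one_mem_graded _)
      ((oneAddNegDegree _ _).pow_mem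
        (dysonFactor_mem_oneAddNegDegree (k := k) hij.symm) (b + 1))
      (map_zero _)
  | a + 1, b + 1 => by
    have hsplit : (dysonFactor i j ^ (a + 1) * dysonFactor j i ^ (b + 1) : k[ι → ℤ]) =
        dysonFactor i j ^ (a + 1) * dysonFactor j i ^ b +
          dysonFactor i j ^ a * dysonFactor j i ^ (b + 1) := by
      linear_combination (dysonFactor i j ^ a * dysonFactor j i ^ b) *
        dysonFactor_mul_swap (k := k) i j
    rw [hsplit, coeff_add, Finsupp.add_apply, coeff_zero_dysonFactor_pow_mul_pow hij (a + 1) b,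
      coeff_zero_dysonFactor_pow_mul_pow hij a (b + 1),
      show a + 1 + (b + 1) = a + b + 1 + 1 by ring, Nat.choose_succ_succ,
      show a + 1 + b = a + b + 1 by ring, show a + (b + 1) = a + b + 1 by ring]
    push_cast
    ring
termination_by a b => a + b

/-- Lagrange interpolation `∑ᵢ ∏_{j ≠ i} (1 - zᵢ / zⱼ)⁻¹ = 1` for three points, with the
denominators cleared. -/
theorem prod_dysonFactor_three (i j l : ι) :
    (dysonFactor i j * dysonFactor i l * dysonFactor j i * dysonFactor j l * dysonFactor l i *
      dysonFactor l j : k[ι → ℤ]) =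
    dysonFactor j i * dysonFactor j l * dysonFactor l i * dysonFactor l j +
      dysonFactor i j * dysonFactor i l * dysonFactor l i * dysonFactor l j +
      dysonFactor i j * dysonFactor i l * dysonFactor j i * dysonFactor j l := by
  have hunit (m : ι) : IsUnit (of' k (ι → ℤ) (Pi.single m 1)) :=
    isUnit_iff_exists_inv.2 ⟨single (-Pi.single m 1) 1, by
      rw [of'_apply, single_mul_single, add_neg_cancel, one_mul, one_def]⟩
  set z : ι → k[ι → ℤ] := fun m ↦ of' k (ι → ℤ) (Pi.single m 1)
  have key : ∀ m n, z n * dysonFactor m n = z n - z m := of'_mul_dysonFactor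
  refine ((((hunit i).mul (hunit j)).mul (hunit l)).pow 2).mul_left_cancel ?_
  calc (z i * z j * z l) ^ 2 * (dysonFactor i j * dysonFactor i l * dysonFactor j i *
        dysonFactor j l * dysonFactor l i * dysonFactor l j)
      = z j * dysonFactor i j * (z l * dysonFactor i l) * (z i * dysonFactor j i) *
          (z l * dysonFactor j l) * (z i * dysonFactor l i) * (z j * dysonFactor l j) := by ring
    _ = (z j - z i) * (z l - z i) * (z i - z j) * (z l - z j) * (z i - z l) * (z j - z l) := by
      simp only [key]
    _ = z j * z l * ((z i - z j) * (z l - z j) * (z i - z l) * (z j - z l)) +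
          z i * z l * ((z j - z i) * (z l - z i) * (z i - z l) * (z j - z l)) +
          z i * z j * ((z j - z i) * (z l - z i) * (z i - z j) * (z l - z j)) := by ring
    _ = z j * z l * (z i * dysonFactor j i * (z l * dysonFactor j l) * (z i * dysonFactor l i) *
            (z j * dysonFactor l j)) +
          z i * z l * (z j * dysonFactor i j * (z l * dysonFactor i l) * (z i * dysonFactor l i) *
            (z j * dysonFactor l j)) +
          z i * z j * (z j * dysonFactor i j * (z l * dysonFactor i l) * (z i * dysonFactor j i) *
            (z l * dysonFactor j l)) := by simp only [key]
    _ = _ := by ring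

noncomputable def dysonProduct3 (i j l : ι) (a b c : ℕ) : k[ι → ℤ] :=
  dysonFactor i j ^ a * dysonFactor i l ^ a * dysonFactor j i ^ b * dysonFactor j l ^ b *
    dysonFactor l i ^ c * dysonFactor l j ^ c

theorem dysonProduct3_succ (i j l : ι) (a b c : ℕ) :
    (dysonProduct3 i j l (a + 1) (b + 1) (c + 1) : k[ι → ℤ]) =
      dysonProduct3 i j l a (b + 1) (c + 1) + dysonProduct3 i j l (a + 1) b (c + 1) +
        dysonProduct3 i j l (a + 1) (b + 1) c := by
  calc (dysonProduct3 i j l (a + 1) (b + 1) (c + 1) : k[ι → ℤ])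
      = dysonProduct3 i j l a b c * (dysonFactor i j * dysonFactor i l * dysonFactor j i *
          dysonFactor j l * dysonFactor l i * dysonFactor l j) := by
        simp only [dysonProduct3]; ring
    _ = _ := by
        rw [prod_dysonFactor_three]; simp only [dysonProduct3]; ring

theorem coeff_zero_dysonProduct3_zero {i j l : ι} (hij : i ≠ j) (hil : i ≠ l) (hjl : j ≠ l)
    (a b : ℕ) : (dysonProduct3 i j l a b 0 : k[ι → ℤ]).coeff 0 * a ! * b ! = (a + b)! := by
  let M := SetLike.GradeZero.submonoid (gradeBy k (Pi.evalAddMonoidHom (fun _ ↦ ℤ) l))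
  let N := oneAddNegDegree k (Pi.evalAddMonoidHom (fun _ ↦ ℤ) l)
  rw [show (dysonProduct3 i j l a b 0 : k[ι → ℤ]) = dysonFactor i j ^ a * dysonFactor j i ^ b *
      (dysonFactor i l ^ a * dysonFactor j l ^ b) by simp only [dysonProduct3]; ring,
    coeff_mul_of_mem_oneAddNegDegree
      (M.mul_mem (M.pow_mem (dysonFactor_mem_gradeBy_zero hil hjl) _)
        (M.pow_mem (dysonFactor_mem_gradeBy_zero hjl hil) _))
      (N.mul_mem (N.pow_mem (dysonFactor_mem_oneAddNegDegree hil) _)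
        (N.pow_mem (dysonFactor_mem_oneAddNegDegree hjl) _)) (map_zero _),
    coeff_zero_dysonFactor_pow_mul_pow hij, Nat.choose_symm_add]
  exact_mod_cast congrArg (Nat.cast : ℕ → k) (Nat.add_choose_mul_factorial_mul_factorial a b)

theorem coeff_zero_dysonProduct3 {i j l : ι} (hij : i ≠ j) (hil : i ≠ l) (hjl : j ≠ l) :
    ∀ a b c : ℕ,
      (dysonProduct3 i j l a b c : k[ι → ℤ]).coeff 0 * a ! * b ! * c ! = (a + b + c)!
  | a, b, 0 => by simpa using coeff_zero_dysonProduct3_zero hij hil hjl a b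
  | 0, b, c + 1 => by
    rw [show (dysonProduct3 i j l 0 b (c + 1) : k[ι → ℤ]) = dysonProduct3 j l i b (c + 1) 0 by
      simp only [dysonProduct3]; ring]
    simpa [add_assoc] using coeff_zero_dysonProduct3_zero hjl hij.symm hil.symm b (c + 1)
  | a + 1, 0, c + 1 => by
    rw [show (dysonProduct3 i j l (a + 1) 0 (c + 1) : k[ι → ℤ]) =
        dysonProduct3 l i j (c + 1) (a + 1) 0 by simp only [dysonProduct3]; ring,
      Nat.factorial_zero, Nat.cast_one, mul_one, add_zero,
      show a + 1 + (c + 1) = c + 1 + (a + 1) by ring]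
    linear_combination
      coeff_zero_dysonProduct3_zero (k := k) hil.symm hjl.symm hij (c + 1) (a + 1)
  | a + 1, b + 1, c + 1 => by
    have hA := coeff_zero_dysonProduct3 hij hil hjl a (b + 1) (c + 1)
    have hB := coeff_zero_dysonProduct3 hij hil hjl (a + 1) b (c + 1)
    have hC := coeff_zero_dysonProduct3 hij hil hjl (a + 1) (b + 1) c
    rw [show a + (b + 1) + (c + 1) = a + b + c + 2 by ring] at hA
    rw [show a + 1 + b + (c + 1) = a + b + c + 2 by ring] at hB
    rw [show a + 1 + (b + 1) + c = a + b + c + 2 by ring] at hC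
    rw [dysonProduct3_succ, coeff_add, coeff_add, Finsupp.add_apply, Finsupp.add_apply,
      show a + 1 + (b + 1) + (c + 1) = a + b + c + 2 + 1 by ring]
    simp only [Nat.factorial_succ, Nat.cast_mul, Nat.cast_add, Nat.cast_one] at hA hB hC ⊢
    linear_combination (↑a + 1) * hA + (↑b + 1) * hB + (↑c + 1) * hC
termination_by a b c => a + b + c

end Dyson

end AddMonoidAlgebra

theorem dyson_three_vars (a : ℕ) :
    ((∏ p ∈ (Finset.univ ×ˢ Finset.univ : Finset (Fin 3 × Fin 3)).filter
          (fun p => p.1 ≠ p.2),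
        (1 - AddMonoidAlgebra.single (Pi.single p.1 (1 : ℤ) - Pi.single p.2 (1 : ℤ)) (1 : ℚ)) ^ a :
        AddMonoidAlgebra ℚ (Fin 3 → ℤ)).coeff (0 : Fin 3 → ℤ)) =
      ((3 * a).factorial : ℚ) / ((a.factorial : ℚ) ^ 3) := by
  have hprod : (∏ p ∈ (Finset.univ ×ˢ Finset.univ : Finset (Fin 3 × Fin 3)).filter
        (fun p => p.1 ≠ p.2),
      (1 - AddMonoidAlgebra.single (Pi.single p.1 (1 : ℤ) - Pi.single p.2 (1 : ℤ)) (1 : ℚ)) ^ a :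
        AddMonoidAlgebra ℚ (Fin 3 → ℤ)) = dysonProduct3 0 1 2 a a a := by
    simp only [Finset.prod_filter, Finset.prod_product, Fin.prod_univ_three, ne_eq, ite_not,
      Fin.reduceEq, ↓reduceIte, one_mul, mul_one, dysonProduct3]
    ring
  rw [hprod, eq_div_iff (by positivity), show 3 * a = a + a + a by ring]
  linear_combination coeff_zero_dysonProduct3 (k := ℚ) (i := (0 : Fin 3)) (j := 1) (l := 2)
    (by decide) (by decide) (by decide) a a a
end

section
/- For r = 2 and nonnegative integers x, y, z: ∫₀¹∫₀¹ t₁^x (1-t₁)^y t₂^x (1-t₂)^y (t₁-t₂)^{2z} dt₁ dt₂ = ∏_{j=1}^{2} (x+(j-1)z)! (y+(j-1)z)! (jz)! / ((x+y+j z+1)! z!). -/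
/-!
Expanding `(t₁ - t₂) ^ n` binomially turns the integral into the alternating sum
`∑ₖ (-1)ᵏ C(n, k) B(x + n - k, y) B(x + k, y)` of products of beta integrals
`B(a, b) = ∫₀¹ tᵃ (1 - t)ᵇ = a! b! / (a + b + 1)!`. A Wilf–Zeilberger certificate shows that this
sum satisfies a first-order recurrence in `y`, which the closed form satisfies as well. At `y = 0`,
partial fractions reduce the sum to `∑ₖ (-1)ᵏ C(n, k) / (a + k + 1)`, which is again a beta
integral, expanded.
-/

open Finset Nat

noncomputable def natBeta (a b : ℕ) : ℝ := a ! * b ! / (a + b + 1)!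

lemma natBeta_zero_right (a : ℕ) : natBeta a 0 = 1 / (a + 1) := by
  rw [natBeta, add_zero, factorial_succ, factorial_zero]
  push_cast
  field_simp

lemma natBeta_succ_left (a b : ℕ) : natBeta (a + 1) b = (a + 1) / (a + b + 2) * natBeta a b := by
  rw [natBeta, natBeta, show a + 1 + b + 1 = (a + b + 1) + 1 by ring, factorial_succ,
    factorial_succ]
  push_cast
  field_simp
  ring

lemma natBeta_succ_right (a b : ℕ) : natBeta a (b + 1) = (b + 1) / (a + b + 2) * natBeta a b := by
  rw [natBeta, natBeta, show a + (b + 1) + 1 = (a + b + 1) + 1 by ring, factorial_succ,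
    factorial_succ]
  push_cast
  field_simp
  ring

lemma integral_pow_mul_one_sub_pow (a b : ℕ) :
    ∫ t in (0 : ℝ)..1, t ^ a * (1 - t) ^ b = natBeta a b := by
  have hB := Complex.betaIntegral_eq_Gamma_mul_div (a + 1) (b + 1)
    (by simp; positivity) (by simp; positivity)
  rw [show (a + 1 : ℂ) + (b + 1) = ((a + b + 1 : ℕ) : ℂ) + 1 by push_cast; ring,
    Complex.Gamma_nat_eq_factorial, Complex.Gamma_nat_eq_factorial,
    Complex.Gamma_nat_eq_factorial] at hB
  simp only [Complex.betaIntegral, add_sub_cancel_right, Complex.cpow_natCast] at hB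
  apply Complex.ofReal_injective
  rw [← intervalIntegral.integral_ofReal, natBeta]
  push_cast
  exact hB

lemma integral_sum_const_mul {ι : Type*} (s : Finset ι) (c : ι → ℝ) (f : ι → ℝ → ℝ)
    (hf : ∀ i, Continuous (f i)) (a b : ℝ) :
    ∫ t in a..b, ∑ i ∈ s, c i * f i t = ∑ i ∈ s, c i * ∫ t in a..b, f i t := by
  rw [intervalIntegral.integral_finsetSum
    fun i _ => ((hf i).const_mul (c i)).intervalIntegrable a b]
  simp only [intervalIntegral.integral_const_mul]

lemma integral_integral_sum_mul {ι : Type*} (s : Finset ι) (c : ι → ℝ) (f g : ι → ℝ → ℝ)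
    (hf : ∀ i, Continuous (f i)) (hg : ∀ i, Continuous (g i)) (a b a' b' : ℝ) :
    ∫ t₁ in a..b, ∫ t₂ in a'..b', ∑ i ∈ s, c i * f i t₁ * g i t₂ =
      ∑ i ∈ s, c i * (∫ t in a..b, f i t) * ∫ t in a'..b', g i t := by
  simp_rw [integral_sum_const_mul s (fun i => c i * f i _) g hg, mul_right_comm (c _) (f _ _),
    integral_sum_const_mul s _ f hf, mul_right_comm]

lemma one_sub_pow_eq_sum (t : ℝ) (n : ℕ) :
    (1 - t) ^ n = ∑ k ∈ range (n + 1), (-1) ^ k * n.choose k * t ^ k := by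
  rw [sub_eq_neg_add, add_pow]
  refine sum_congr rfl fun k _ => ?_
  rw [neg_pow]
  ring

lemma sum_neg_one_pow_mul_choose_div (a n : ℕ) :
    ∑ k ∈ range (n + 1), (-1) ^ k * n.choose k / (a + k + 1 : ℝ) = natBeta a n := by
  have hexpand (t : ℝ) : t ^ a * (1 - t) ^ n =
      ∑ k ∈ range (n + 1), (-1) ^ k * n.choose k * t ^ (a + k) := by
    simp only [one_sub_pow_eq_sum, mul_sum, pow_add]
    exact sum_congr rfl fun k _ => by ring
  rw [← integral_pow_mul_one_sub_pow, funext hexpand,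
    integral_sum_const_mul _ _ _ fun k => continuous_pow (a + k)]
  refine sum_congr rfl fun k _ => ?_
  rw [integral_pow]
  push_cast
  ring

lemma neg_one_pow_sub {n k : ℕ} (h : k ≤ n) : (-1 : ℝ) ^ (n - k) = (-1) ^ n * (-1) ^ k := by
  rw [pow_sub₀ _ (by norm_num) h, ← inv_pow, inv_neg_one]

noncomputable def selbergSum (x y n : ℕ) : ℝ :=
  ∑ k ∈ range (n + 1), (-1) ^ k * n.choose k * natBeta (x + (n - k)) y * natBeta (x + k) y

lemma integral_integral_eq_selbergSum (x y n : ℕ) :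
    ∫ t₁ in (0 : ℝ)..1, ∫ t₂ in (0 : ℝ)..1,
      t₁ ^ x * (1 - t₁) ^ y * t₂ ^ x * (1 - t₂) ^ y * (t₁ - t₂) ^ n = selbergSum x y n := by
  have hexpand (t₁ t₂ : ℝ) : t₁ ^ x * (1 - t₁) ^ y * t₂ ^ x * (1 - t₂) ^ y * (t₁ - t₂) ^ n =
      ∑ k ∈ range (n + 1), (-1) ^ k * n.choose k *
        (t₁ ^ (x + (n - k)) * (1 - t₁) ^ y) * (t₂ ^ (x + k) * (1 - t₂) ^ y) := by
    rw [show t₁ - t₂ = -t₂ + t₁ by ring, add_pow, mul_sum]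
    refine sum_congr rfl fun k _ => ?_
    rw [neg_pow, pow_add, pow_add]
    ring
  simp_rw [hexpand]
  rw [integral_integral_sum_mul (range (n + 1)) (fun k => (-1) ^ k * n.choose k)
    (fun k t => t ^ (x + (n - k)) * (1 - t) ^ y) (fun k t => t ^ (x + k) * (1 - t) ^ y)
    (fun _ => by fun_prop) (fun _ => by fun_prop)]
  simp only [integral_pow_mul_one_sub_pow, selbergSum]

lemma selbergSum_zero_right (x n : ℕ) :
    (2 * x + n + 2) * selbergSum x 0 n = (1 + (-1) ^ n) * natBeta x n := by
  have hsplit (k : ℕ) (hk : k ≤ n) :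
      (2 * x + n + 2) * ((-1) ^ k * n.choose k * natBeta (x + (n - k)) 0 * natBeta (x + k) 0) =
        (-1) ^ k * n.choose k / (x + (n - k : ℕ) + 1 : ℝ) +
          (-1) ^ k * n.choose k / (x + k + 1 : ℝ) := by
    obtain ⟨j, rfl⟩ := Nat.exists_eq_add_of_le hk
    simp only [natBeta_zero_right, Nat.add_sub_cancel_left]
    push_cast
    field_simp
    ring
  have hreflect : ∑ k ∈ range (n + 1), (-1) ^ k * n.choose k / (x + (n - k : ℕ) + 1 : ℝ) =
      (-1) ^ n * natBeta x n := by
    rw [← sum_range_reflect, ← sum_neg_one_pow_mul_choose_div, mul_sum]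
    refine sum_congr rfl fun k hk => ?_
    have hk : k ≤ n := mem_range_succ_iff.mp hk
    rw [add_tsub_cancel_right, Nat.sub_sub_self hk, neg_one_pow_sub hk, choose_symm hk]
    ring
  rw [selbergSum, mul_sum,
    sum_congr rfl fun k hk => hsplit k (mem_range_succ_iff.mp hk),
    sum_add_distrib, hreflect, sum_neg_one_pow_mul_choose_div]
  ring

/-- Wilf–Zeilberger certificate for `selbergSum_succ_right`, found by Zeilberger's algorithm. -/
noncomputable def selbergCert (x y n k : ℕ) : ℝ :=
  (-1) ^ k * k * n.choose k * natBeta (x + (n + 1 - k)) y * natBeta (x + k) y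

lemma selbergCert_succ_sub (x y n k : ℕ) (hk : k ≤ n) :
    (y + 1) * (selbergCert x y n (k + 1) - selbergCert x y n k) =
      (2 * x + 2 * y + n + 4) * (x + y + n + 2) *
          ((-1) ^ k * n.choose k * natBeta (x + (n - k)) (y + 1) * natBeta (x + k) (y + 1)) -
        (y + 1) * (2 * y + n + 2) *
          ((-1) ^ k * n.choose k * natBeta (x + (n - k)) y * natBeta (x + k) y) := by
  obtain ⟨j, rfl⟩ := Nat.exists_eq_add_of_le hk
  have hchoose : ((k + 1 : ℕ) : ℝ) * (k + j).choose (k + 1) = j * (k + j).choose k := by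
    rw [mul_comm]
    exact_mod_cast (k + j).choose_succ_right_eq k |>.trans
      (by rw [Nat.add_sub_cancel_left, mul_comm])
  rw [selbergCert, selbergCert, show k + j + 1 - (k + 1) = j by omega,
    show k + j + 1 - k = j + 1 by omega, Nat.add_sub_cancel_left, ← add_assoc, ← add_assoc,
    natBeta_succ_left, natBeta_succ_left, natBeta_succ_right, natBeta_succ_right,
    mul_assoc ((-1 : ℝ) ^ (k + 1)), hchoose]
  push_cast
  field_simp
  ring

lemma selbergSum_succ_right (x y n : ℕ) :
    (2 * x + 2 * y + n + 4) * (x + y + n + 2) * selbergSum x (y + 1) n =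
      (y + 1) * (2 * y + n + 2) * selbergSum x y n := by
  have htelescope : ∑ k ∈ range (n + 1),
      (y + 1) * (selbergCert x y n (k + 1) - selbergCert x y n k) = 0 := by
    rw [← mul_sum, sum_range_sub]
    simp [selbergCert]
  rw [sum_congr rfl fun k hk => selbergCert_succ_sub x y n k (mem_range_succ_iff.mp hk),
    sum_sub_distrib, ← mul_sum, ← mul_sum, sub_eq_zero] at htelescope
  exact htelescope

lemma selbergSum_two_mul (x y z : ℕ) :
    selbergSum x y (2 * z) = x ! * y ! * (x + z)! * (y + z)! * (2 * z)! /
      ((x + y + z + 1)! * (x + y + 2 * z + 1)! * z !) := by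
  induction y with
  | zero =>
    have h := selbergSum_zero_right x (2 * z)
    rw [(even_two_mul z).neg_one_pow, natBeta] at h
    rw [eq_div_of_mul_eq (by positivity) ((mul_comm _ _).trans h), add_zero, zero_add,
      factorial_zero, factorial_succ (x + z)]
    push_cast
    field_simp
    ring
  | succ y ih =>
    have h := selbergSum_succ_right x y (2 * z)
    rw [ih] at h
    rw [eq_div_of_mul_eq (by positivity) ((mul_comm _ _).trans h),
      show y + 1 + z = (y + z) + 1 by ring, show x + (y + 1) + z + 1 = (x + y + z + 1) + 1 by ring,
      show x + (y + 1) + 2 * z + 1 = (x + y + 2 * z + 1) + 1 by ring, factorial_succ (y + z),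
      factorial_succ (x + y + z + 1), factorial_succ (x + y + 2 * z + 1), factorial_succ y]
    push_cast
    field_simp
    ring

theorem selberg_two_vars (x y z : ℕ) :
    ∫ t₁ in (0 : ℝ)..1, ∫ t₂ in (0 : ℝ)..1,
        (t₁ ^ x * (1 - t₁) ^ y * t₂ ^ x * (1 - t₂) ^ y * (t₁ - t₂) ^ (2 * z)) =
      ∏ j ∈ Finset.Icc 1 2,
        ((x + (j - 1) * z).factorial : ℝ) * ((y + (j - 1) * z).factorial : ℝ) *
          ((j * z).factorial : ℝ) /
          (((x + y + j * z + 1).factorial : ℝ) * (z.factorial : ℝ)) := by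
  rw [integral_integral_eq_selbergSum, selbergSum_two_mul, show Icc 1 2 = {1, 2} by rfl,
    prod_pair (by norm_num)]
  norm_num
  field_simp
end
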